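/- arXiv:2110.13307 — 2 statements merged into one kernel-verified Lean document; each statement's English description precedes it below -/
import Mathlib

section
/- For the pairwise-comparison process with two strategies A and B in a population of size N ≥ 2 and selection intensity β, the ratio of fixation probabilities satisfies ρ_{B,A} / ρ_{A,B} = exp(β · Σ_{k=1}^{N−1} (Π_A(k) − Π_B(k))). -/
open Finset Real

/-- Average payoff of strategy A when `k` individuals (out of `N`) use A,
given pairwise payoffs `πAA` (A vs A) and `πAB` (A vs B). -/
noncomputable def PiA (N : ℕ) (pAA pAB : ℝ) (k : ℕ) : ℝ :=
  (((k : ℝ) - 1) * pAA + ((N : ℝ) - (k : ℝ)) * pAB) / ((N : ℝ) - 1)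

/-- Average payoff of strategy B when `k` individuals (out of `N`) use A,
given pairwise payoffs `πBA` (B vs A) and `πBB` (B vs B). -/
noncomputable def PiB (N : ℕ) (pBA pBB : ℝ) (k : ℕ) : ℝ :=
  ((k : ℝ) * pBA + ((N : ℝ) - (k : ℝ) - 1) * pBB) / ((N : ℝ) - 1)

/-- Fixation probability `ρ_{B,A}` of a single A-mutant in a population of `N − 1`
B-players under the pairwise-comparison rule with selection intensity `β`, where
`πAA, πAB, πBA, πBB` are the pairwise payoffs.  (The fixation probability `ρ_{A,B}`
of a single B-mutant among A-players is obtained by exchanging the roles of A and B,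
i.e. `rhoFix N β πBB πBA πAB πAA`.) -/
noncomputable def rhoFix (N : ℕ) (β pAA pAB pBA pBB : ℝ) : ℝ :=
  (1 + ∑ i ∈ Finset.Icc 1 (N - 1), ∏ j ∈ Finset.Icc 1 i,
      Real.exp (-β * (PiA N pAA pAB j - PiB N pBA pBB j)))⁻¹

/-! The swapped process is the original one read backwards: with `g k = β (Π_A(k) − Π_B(k))`,
the `j`-th factor in the denominator of `ρ_{A,B}` is `exp (g (N − j))`. Its `i`-th partial
product is therefore `exp (S_{N-1} − S_{N-1-i})` with `S_m = g 1 + ⋯ + g m`, so after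
reindexing the denominator of `ρ_{A,B}` is `exp S_{N-1}` times that of `ρ_{B,A}`. -/

lemma add_sum_Icc_one_eq_sum_range {M : Type*} [AddCommMonoid M] (f : ℕ → M) (n : ℕ) :
    f 0 + ∑ i ∈ Icc 1 n, f i = ∑ i ∈ range (n + 1), f i := by
  rw [Nat.range_succ_eq_Icc_zero, ← insert_Icc_add_one_left_eq_Icc n.zero_le,
    sum_insert (by simp), zero_add]

lemma sum_Icc_one_reflect {M : Type*} [AddCommGroup M] (g : ℕ → M) {i n : ℕ} (hi : i ≤ n) :
    ∑ j ∈ Icc 1 i, g (n + 1 - j) = ∑ k ∈ Icc 1 n, g k - ∑ k ∈ Icc 1 (n - i), g k := by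
  induction i with
  | zero => simp
  | succ i ih =>
    rw [sum_Icc_succ_top (by omega), ih (by omega), show n + 1 - (i + 1) = n - i by omega,
      show n - i = n - (i + 1) + 1 by omega, sum_Icc_succ_top (by omega)]
    abel

lemma one_add_sum_prod_exp_reflect (g : ℕ → ℝ) (n : ℕ) :
    1 + ∑ i ∈ Icc 1 n, ∏ j ∈ Icc 1 i, exp (g (n + 1 - j))
      = exp (∑ k ∈ Icc 1 n, g k) * (1 + ∑ i ∈ Icc 1 n, ∏ j ∈ Icc 1 i, exp (-g j)) := by
  set S : ℕ → ℝ := fun m => ∑ k ∈ Icc 1 m, g k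
  calc 1 + ∑ i ∈ Icc 1 n, ∏ j ∈ Icc 1 i, exp (g (n + 1 - j))
      = ∑ i ∈ range (n + 1), exp (S n - S (n - i)) := by
        rw [← add_sum_Icc_one_eq_sum_range, Nat.sub_zero, sub_self, exp_zero]
        refine congrArg _ (sum_congr rfl fun i hi => ?_)
        rw [← exp_sum, sum_Icc_one_reflect g (mem_Icc.1 hi).2]
    _ = ∑ i ∈ range (n + 1), exp (S n - S i) := by
        simpa using sum_range_reflect (fun i => exp (S n - S i)) (n + 1)
    _ = exp (S n) * (1 + ∑ i ∈ Icc 1 n, ∏ j ∈ Icc 1 i, exp (-g j)) := by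
        rw [← add_sum_Icc_one_eq_sum_range, mul_add, mul_one, mul_sum]
        congr 1
        · simp [S]
        · refine sum_congr rfl fun i _ => ?_
          rw [← exp_sum, ← exp_add, sum_neg_distrib, sub_eq_add_neg]

lemma PiA_eq_PiB_sub (N : ℕ) (p q : ℝ) {k : ℕ} (hk : k ≤ N) :
    PiA N p q k = PiB N q p (N - k) := by
  simp only [PiA, PiB, Nat.cast_sub hk]
  ring

lemma PiB_eq_PiA_sub (N : ℕ) (p q : ℝ) {k : ℕ} (hk : k ≤ N) :
    PiB N p q k = PiA N q p (N - k) := by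
  simp only [PiA, PiB, Nat.cast_sub hk]
  ring

lemma rhoFix_pos (N : ℕ) (β pAA pAB pBA pBB : ℝ) : 0 < rhoFix N β pAA pAB pBA pBB :=
  inv_pos.2 (by positivity)

lemma inv_rhoFix_swap (N : ℕ) (β pAA pAB pBA pBB : ℝ) :
    (rhoFix N β pBB pBA pAB pAA)⁻¹ = exp (β * ∑ k ∈ Icc 1 (N - 1),
        (PiA N pAA pAB k - PiB N pBA pBB k)) * (rhoFix N β pAA pAB pBA pBB)⁻¹ := by
  have reflected : ∀ i ∈ Icc 1 (N - 1),
      ∏ j ∈ Icc 1 i, exp (-β * (PiA N pBB pBA j - PiB N pAB pAA j))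
        = ∏ j ∈ Icc 1 i,
            exp (β * (PiA N pAA pAB (N - 1 + 1 - j) - PiB N pBA pBB (N - 1 + 1 - j))) := by
    intro i hi
    refine prod_congr rfl fun j hj => ?_
    have hjN : j ≤ N := by grind
    rw [show N - 1 + 1 - j = N - j by grind, PiA_eq_PiB_sub N _ _ hjN,
      PiB_eq_PiA_sub N _ _ hjN]
    ring_nf
  have h := one_add_sum_prod_exp_reflect (fun k => β * (PiA N pAA pAB k - PiB N pBA pBB k)) (N - 1)
  simp only [rhoFix, inv_inv]
  rw [sum_congr rfl reflected]
  simpa only [neg_mul, ← mul_sum] using h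

theorem fixation_prob_ratio_general (N : ℕ) (β pAA pAB pBA pBB : ℝ) :
    rhoFix N β pAA pAB pBA pBB / rhoFix N β pBB pBA pAB pAA
      = Real.exp (β * ∑ k ∈ Finset.Icc 1 (N - 1),
          (PiA N pAA pAB k - PiB N pBA pBB k)) := by
  rw [div_eq_mul_inv, inv_rhoFix_swap, mul_left_comm,
    mul_inv_cancel₀ (rhoFix_pos N β pAA pAB pBA pBB).ne', mul_one]

/-- **Ratio of fixation probabilities for the pairwise-comparison process.**
For two strategies A and B in a population of size `N ≥ 2` with selection
intensity `β`, `ρ_{B,A} / ρ_{A,B} = exp(β · Σ_{k=1}^{N−1} (Π_A(k) − Π_B(k)))`. -/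
theorem fixation_prob_ratio (N : ℕ) (hN : 2 ≤ N) (β pAA pAB pBA pBB : ℝ) :
    rhoFix N β pAA pAB pBA pBB / rhoFix N β pBB pBA pAB pAA
      = Real.exp (β * ∑ k ∈ Finset.Icc 1 (N - 1),
          (PiA N pAA pAB k - PiB N pBA pBB k)) :=
  fixation_prob_ratio_general N β pAA pAB pBA pBB
end

section
/- Fix pairwise payoffs π_AA, π_AB, π_BA, π_BB and selection intensity β > 0 for the pairwise-comparison process. If π_AA + π_AB > π_BA + π_BB, then there exists N₀ such that for all population sizes N ≥ N₀, the fixation probabilities satisfy ρ_{B,A} > ρ_{A,B}; that is, in the limit of large N the risk-dominance condition π_AA + π_AB > π_BA + π_BB implies that the transition from B to A is stronger than the reverse. -/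
open Finset Real

/-!
With `γ j = exp (-β (Π_A(j) - Π_B(j)))` the transition ratios of the invasion of A, those of
the reverse invasion are `(γ (N - j))⁻¹`. Reflecting the summation index in
`1 / ρ_{A,B} = ∑_{i<N} ∏_{0<j≤i} (γ (N - j))⁻¹` gives `ρ_{A,B} = (∏_{0<j<N} γ j) ρ_{B,A}`, i.e.
`ρ_{A,B} = exp (-β G) ρ_{B,A}` with the total payoff gap `G = ∑_{0<j<N} (Π_A(j) - Π_B(j))`.
Since `G = N/2 (π_AA + π_AB - π_BA - π_BB) - (π_AA - π_BB)`, risk dominance makes `G`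
positive for large `N`.
-/

theorem Icc_one_eq_Ioc_zero (m : ℕ) : Icc 1 m = Ioc 0 m := Icc_add_one_left_eq_Ioc 0 m

theorem prod_Icc_mul_sum_prod_Icc_inv_reflect {K : Type*} [Semifield K] (n : ℕ) (γ : ℕ → K)
    (hγ : ∀ j ∈ Icc 1 n, γ j ≠ 0) :
    (∏ j ∈ Icc 1 n, γ j) * ∑ i ∈ range (n + 1), ∏ j ∈ Icc 1 i, (γ (n + 1 - j))⁻¹ =
      ∑ i ∈ range (n + 1), ∏ j ∈ Icc 1 i, γ j := by
  rw [mul_sum, ← sum_range_reflect (fun i => ∏ j ∈ Icc 1 i, γ j)]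
  refine sum_congr rfl fun i hi => ?_
  have hin : i ≤ n := Nat.lt_succ_iff.mp (mem_range.mp hi)
  have hreflect : ∏ j ∈ Icc 1 i, γ (n + 1 - j) = ∏ j ∈ Ioc (n - i) n, γ j := by
    rw [← Ico_add_one_right_eq_Icc, prod_Ico_reflect _ _ (by omega)]
    congr 1
    ext j; simp only [mem_Ico, mem_Ioc]; omega
  have hne : ∏ j ∈ Ioc (n - i) n, γ j ≠ 0 :=
    prod_ne_zero_iff.mpr fun j hj => hγ j (by simp only [mem_Ioc, mem_Icc] at hj ⊢; omega)
  have hsplit : ∏ j ∈ Icc 1 n, γ j = (∏ j ∈ Icc 1 (n - i), γ j) * ∏ j ∈ Ioc (n - i) n, γ j := by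
    simp only [Icc_one_eq_Ioc_zero]
    exact (prod_Ioc_consecutive γ (Nat.zero_le _) (Nat.sub_le n i)).symm
  rw [prod_inv_distrib, hreflect, hsplit, mul_inv_cancel_right₀ hne, Nat.add_sub_cancel]

theorem one_add_sum_Icc_prod_eq_sum_range {M : Type*} [CommSemiring M] (n : ℕ) (f : ℕ → M) :
    1 + ∑ i ∈ Icc 1 n, ∏ j ∈ Icc 1 i, f j = ∑ i ∈ range (n + 1), ∏ j ∈ Icc 1 i, f j := by
  rw [Nat.range_succ_eq_Icc_zero, ← add_sum_Ioc_eq_sum_Icc (Nat.zero_le n), Icc_one_eq_Ioc_zero n]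
  simp

theorem PiA_sub_PiB_swap (N j : ℕ) (hj : j ≤ N) (a b c d : ℝ) :
    PiA N d c j - PiB N b a j = -(PiA N a b (N - j) - PiB N c d (N - j)) := by
  unfold PiA PiB
  rw [Nat.cast_sub hj]
  ring

theorem sum_Icc_natCast (n : ℕ) : ∑ j ∈ Icc 1 n, (j : ℝ) = n * (n + 1) / 2 := by
  induction n with
  | zero => simp
  | succ n ih =>
    rw [sum_Icc_succ_top (by omega), ih]
    push_cast
    ring

theorem sum_PiA_sub_PiB (N : ℕ) (hN : 2 ≤ N) (a b c d : ℝ) :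
    ∑ j ∈ Icc 1 (N - 1), (PiA N a b j - PiB N c d j) = N / 2 * (a + b - c - d) - (a - d) := by
  have hN1 : ((N - 1 : ℕ) : ℝ) = N - 1 := by rw [Nat.cast_sub (by omega), Nat.cast_one]
  have hN1_ne : (N : ℝ) - 1 ≠ 0 := by
    have : (2 : ℝ) ≤ N := by exact_mod_cast hN
    linarith
  have hlinear : ∀ j : ℕ, PiA N a b j - PiB N c d j =
      (j * (a - b - c + d) + (N * b - a - (N - 1) * d)) / (N - 1) := by
    intro j
    unfold PiA PiB
    ring
  simp only [hlinear, ← sum_div, sum_add_distrib, ← sum_mul, sum_Icc_natCast, sum_const,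
    Nat.card_Icc, nsmul_eq_mul, Nat.add_sub_cancel, hN1]
  field_simp
  ring

theorem rhoFix_swap (N : ℕ) (β a b c d : ℝ) :
    rhoFix N β d c b a =
      exp (-β * ∑ j ∈ Icc 1 (N - 1), (PiA N a b j - PiB N c d j)) * rhoFix N β a b c d := by
  set γ : ℕ → ℝ := fun j => exp (-β * (PiA N a b j - PiB N c d j))
  have hγ_swap : ∀ i ∈ Icc 1 (N - 1), ∀ j ∈ Icc 1 i,
      exp (-β * (PiA N d c j - PiB N b a j)) = (γ (N - 1 + 1 - j))⁻¹ := by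
    intro i hi j hj
    simp only [mem_Icc] at hi hj
    rw [PiA_sub_PiB_swap N j (by omega), show N - 1 + 1 - j = N - j by omega, ← exp_neg]
    ring_nf
  have hprod : ∏ j ∈ Icc 1 (N - 1), γ j =
      exp (-β * ∑ j ∈ Icc 1 (N - 1), (PiA N a b j - PiB N c d j)) := by
    rw [mul_sum, exp_sum]
  have hprod_ne : ∏ j ∈ Icc 1 (N - 1), γ j ≠ 0 := prod_ne_zero_iff.mpr fun j _ => (exp_pos _).ne'
  unfold rhoFix
  rw [sum_congr rfl fun i hi => prod_congr rfl (hγ_swap i hi), one_add_sum_Icc_prod_eq_sum_range,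
    one_add_sum_Icc_prod_eq_sum_range, ← hprod,
    ← prod_Icc_mul_sum_prod_Icc_inv_reflect (N - 1) γ fun j _ => (exp_pos _).ne', mul_inv,
    mul_inv_cancel_left₀ hprod_ne]

theorem rhoFix_pos_s4 (N : ℕ) (β a b c d : ℝ) : 0 < rhoFix N β a b c d := by
  unfold rhoFix
  positivity

open Filter

/-- **Risk dominance implies stronger transition for large populations.**
If `π_AA + π_AB > π_BA + π_BB` (risk dominance of A over B), then for all
sufficiently large population sizes `N`, the fixation probability of a single
A-mutant among B-players exceeds that of a single B-mutant among A-players: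
`ρ_{B,A} > ρ_{A,B}`. -/
theorem risk_dominance_large_N (β : ℝ) (hβ : 0 < β) (pAA pAB pBA pBB : ℝ)
    (hrd : pAA + pAB > pBA + pBB) :
    ∃ N₀ : ℕ, ∀ N : ℕ, N₀ ≤ N →
      rhoFix N β pAA pAB pBA pBB > rhoFix N β pBB pBA pAB pAA := by
  have hgap : Tendsto (fun N : ℕ => (N : ℝ) / 2 * (pAA + pAB - pBA - pBB) - (pAA - pBB))
      atTop atTop := by
    simp only [sub_eq_add_neg _ (pAA - pBB)]
    refine tendsto_atTop_add_const_right _ _ (Tendsto.atTop_mul_const (by linarith) ?_)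
    exact tendsto_natCast_atTop_atTop.atTop_div_const two_pos
  refine eventually_atTop.mp ?_
  filter_upwards [eventually_ge_atTop 2, hgap.eventually_gt_atTop 0] with N hN hpos
  rw [gt_iff_lt, rhoFix_swap, sum_PiA_sub_PiB N hN]
  exact mul_lt_of_lt_one_left (rhoFix_pos_s4 ..) (exp_lt_one_iff.mpr (by nlinarith))
end
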